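/- Let d ≥ 2, and let h, ĥ : X → ℝ≥0 with a self-map f : X → X satisfying ĥ(f(x)) = d·ĥ(x) and |ĥ(x) - h(x)| ≤ C for all x ∈ X, where C > 0. Suppose moreover there exists N ∈ ℕ such that for every x: if h(fⁿ(x)) < 2C for all n = 0,…,N, then h(fⁿ(x)) < 2C for all n ∈ ℕ. Then every x ∈ X with ĥ(x) < C/d^N satisfies ĥ(x) = 0. -/
import Mathlib


theorem stmt_2 {X : Type*} (f : X → X) (h hhat : X → ℝ) (d : ℕ) (hd : 2 ≤ d)
    (C : ℝ) (hC : 0 < C)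
    (hpos : ∀ x, 0 ≤ h x) (hhatpos : ∀ x, 0 ≤ hhat x)
    (hmult : ∀ x, hhat (f x) = d * hhat x)
    (hbound : ∀ x, |hhat x - h x| ≤ C)
    (N : ℕ)
    (hNoeth : ∀ x, (∀ n ≤ N, h (f^[n] x) < 2 * C) → ∀ n : ℕ, h (f^[n] x) < 2 * C) :
    ∀ x : X, hhat x < C / (d : ℝ) ^ N → hhat x = 0 := by
  intro x hx
  have hd1 : (1 : ℝ) ≤ (d : ℝ) := by exact_mod_cast Nat.one_le_of_lt hd
  have hiter : ∀ n : ℕ, hhat (f^[n] x) = (d : ℝ) ^ n * hhat x := by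
    intro n
    induction n with
    | zero => simp
    | succ n ih =>
      rw [Function.iterate_succ_apply', hmult, ih, pow_succ]
      ring
  have hsmall : ∀ n ≤ N, h (f^[n] x) < 2 * C := by
    intro n hn
    have h1 : hhat (f^[n] x) < C := by
      rw [hiter]
      calc (d : ℝ) ^ n * hhat x ≤ (d : ℝ) ^ N * hhat x := by
            apply mul_le_mul_of_nonneg_right (pow_le_pow_right₀ hd1 hn) (hhatpos x)
        _ < (d : ℝ) ^ N * (C / (d : ℝ) ^ N) := by
            apply mul_lt_mul_of_pos_left hx (pow_pos (by linarith) N)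
        _ = C := by field_simp
    have := hbound (f^[n] x)
    rw [abs_le] at this
    linarith
  have hall := hNoeth x hsmall
  have hbdd : ∀ n : ℕ, (d : ℝ) ^ n * hhat x < 3 * C := by
    intro n
    have := hbound (f^[n] x)
    rw [abs_le] at this
    have := hall n
    rw [← hiter]
    linarith
  by_contra hne
  have hpos' : 0 < hhat x := lt_of_le_of_ne (hhatpos x) (Ne.symm hne)
  obtain ⟨n, hn⟩ := pow_unbounded_of_one_lt (3 * C / hhat x)
    (by exact_mod_cast hd : (1:ℝ) < d)
  have := hbdd n
  rw [div_lt_iff₀ hpos'] at hn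
  linarith
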